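/- arXiv:2602.03783 — 2 statements merged into one kernel-verified Lean document; each statement's English description precedes it below -/
import Mathlib

section
/- Let X be a finite set of distinct points in R^K and let k(x,y) = exp(-γ‖x-y‖^2) be the Gaussian RBF kernel with γ > 0. Then the Gram matrix K_G with entries K_G(i,j) = k(x_i, x_j) over an enumeration x_1,...,x_m of X is strictly positive definite, and hence for any target values y_1,...,y_m ∈ R there exists a unique coefficient vector θ ∈ R^m with K_G θ = y, so that the function g(x) = Σ_i θ_i k(x_i, x) satisfies g(x_j) = y_j for all j. -/
/-!
Writing `‖a - b‖² = ‖a‖² + ‖b‖² - 2⟪a, b⟫`, the Gaussian Gram matrix is `D E D` with `D` a positive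
diagonal matrix and `E = (exp ⟪yᵢ, yⱼ⟫)` for the rescaled points `yᵢ = √(2γ) xᵢ`, so it suffices
that `E` is positive definite. Expanding the exponential, `vᵀ E v = ∑ₙ vᵀ Gₙ v / n!` where
`Gₙ = (⟪yᵢ, yⱼ⟫ⁿ)` is a Hadamard power of the Gram matrix, hence positive semidefinite by Schur's
product theorem. If `vᵀ E v = 0` then every `Gₙ v` vanishes, i.e. `∑ⱼ vⱼ ⟪yᵢ, yⱼ⟫ⁿ = 0` for all
`i, n`. Choosing `i` of maximal norm among the points with `vᵢ ≠ 0`, the value `‖yᵢ‖²` of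
`⟪yᵢ, yⱼ⟫` is attained on the support of `v` only at `j = i` (equality case of Cauchy–Schwarz),
and a polynomial separating this value from the other values of `⟪yᵢ, ·⟫` forces `vᵢ = 0`.
-/

open Finset Matrix Polynomial
open scoped InnerProductSpace ComplexOrder Nat

theorem Matrix.IsSymm.vecMul_eq_mulVec {R ι : Type*} [CommSemiring R] [Fintype ι]
    {A : Matrix ι ι R} (hA : A.IsSymm) (θ : ι → R) : θ ᵥ* A = A *ᵥ θ := by
  rw [← vecMul_transpose, hA.eq]

theorem Matrix.PosDef.mulVec_bijective {K ι : Type*} [Field K] [PartialOrder K] [StarRing K]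
    [Fintype ι] {A : Matrix ι ι K} (hA : A.PosDef) : Function.Bijective A.mulVec := by
  classical
  exact ⟨mulVec_injective_iff_isUnit.mpr hA.isUnit, mulVec_surjective_iff_isUnit.mpr hA.isUnit⟩

theorem sum_filter_eq_zero_of_forall_sum_mul_pow_eq_zero {𝕜 ι : Type*} [Field 𝕜] [Fintype ι]
    [DecidableEq 𝕜] (t v : ι → 𝕜) (h : ∀ n : ℕ, ∑ j, v j * t j ^ n = 0) (a : 𝕜) :
    ∑ j with t j = a, v j = 0 := by
  have h_poly (q : 𝕜[X]) : ∑ j, v j * q.eval (t j) = 0 := by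
    simp_rw [eval_eq_sum_range, Finset.mul_sum]
    rw [Finset.sum_comm]
    refine Finset.sum_eq_zero fun n _ => ?_
    simp_rw [mul_left_comm (v _), ← Finset.mul_sum, h n, mul_zero]
  set p : 𝕜[X] := ∏ b ∈ (univ.image t).erase a, (X - C b)
  have hp_ne : p.eval a ≠ 0 := by
    simp only [p, eval_prod, eval_sub, eval_X, eval_C]
    exact prod_ne_zero_iff.mpr fun b hb => sub_ne_zero.mpr (ne_of_mem_erase hb).symm
  have hp_eq (j : ι) : p.eval (t j) = if t j = a then p.eval a else 0 := by
    split_ifs with hj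
    · rw [hj]
    · simp only [p, eval_prod, eval_sub, eval_X, eval_C]
      exact prod_eq_zero (mem_erase.mpr ⟨hj, mem_image_of_mem t (mem_univ j)⟩) (sub_self _)
  have := h_poly p
  simp_rw [hp_eq, mul_ite, mul_zero, ← Finset.sum_filter, ← Finset.sum_mul] at this
  exact (mul_eq_zero.mp this).resolve_right hp_ne

theorem posSemidef_inner_pow {𝕜 E ι : Type*} [RCLike 𝕜] [NormedAddCommGroup E]
    [InnerProductSpace 𝕜 E] [Finite ι] (x : ι → E) (n : ℕ) :
    (of fun i j => ⟪x i, x j⟫_𝕜 ^ n).PosSemidef := by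
  induction n with
  | zero =>
    convert posSemidef_gram 𝕜 fun _ : ι => (1 : 𝕜)
    ext; simp [gram]
  | succ n ih =>
    convert ih.hadamard (posSemidef_gram 𝕜 x) using 1
    ext; simp [gram, pow_succ]

theorem eq_of_inner_eq_norm_sq_of_norm_le {E : Type*} [NormedAddCommGroup E]
    [InnerProductSpace ℝ E] {a b : E} (hab : ⟪a, b⟫_ℝ = ‖a‖ ^ 2) (hb : ‖b‖ ≤ ‖a‖) : b = a := by
  have : ‖a - b‖ ^ 2 ≤ 0 := by
    rw [norm_sub_sq_real, hab]
    nlinarith [norm_nonneg b]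
  exact (sub_eq_zero.mp (norm_eq_zero.mp (by nlinarith [norm_nonneg (a - b)]))).symm

section

variable {E ι : Type*} [NormedAddCommGroup E] [InnerProductSpace ℝ E] [Fintype ι]

theorem eq_zero_of_forall_sum_mul_inner_pow_eq_zero {x : ι → E} (hx : Function.Injective x)
    {v : ι → ℝ} (h : ∀ i (n : ℕ), ∑ j, v j * ⟪x i, x j⟫_ℝ ^ n = 0) : v = 0 := by
  classical
  by_contra hv
  obtain ⟨i₀, hi₀, hmax⟩ := (univ.filter (v · ≠ 0)).exists_max_image (‖x ·‖)
    (by simpa [Finset.filter_nonempty_iff, funext_iff] using hv)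
  have hsum := sum_filter_eq_zero_of_forall_sum_mul_pow_eq_zero _ v (h i₀) (‖x i₀‖ ^ 2)
  rw [Finset.sum_eq_single_of_mem i₀ (by simp)] at hsum
  · exact (mem_filter.mp hi₀).2 hsum
  intro j hj hji₀
  by_contra hvj
  exact hji₀ (hx (eq_of_inner_eq_norm_sq_of_norm_le (mem_filter.mp hj).2
    (hmax j (by simpa using hvj))))

theorem hasSum_dotProduct_exp_inner_mulVec (x : ι → E) (v : ι → ℝ) :
    HasSum (fun n : ℕ => (n ! : ℝ)⁻¹ * (v ⬝ᵥ (of fun i j => ⟪x i, x j⟫_ℝ ^ n) *ᵥ v))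
      (v ⬝ᵥ (of fun i j => Real.exp ⟪x i, x j⟫_ℝ) *ᵥ v) := by
  simp only [dotProduct, mulVec, of_apply, Finset.mul_sum]
  refine hasSum_sum fun i _ => hasSum_sum fun j _ => ?_
  have := (NormedSpace.expSeries_div_hasSum_exp (⟪x i, x j⟫_ℝ)).mul_left (v i * v j)
  rw [← Real.exp_eq_exp_ℝ] at this
  simpa only [div_eq_inv_mul, mul_comm, mul_left_comm, mul_assoc] using this

theorem posDef_exp_inner {x : ι → E} (hx : Function.Injective x) :
    (of fun i j => Real.exp ⟪x i, x j⟫_ℝ).PosDef := by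
  refine .of_dotProduct_mulVec_pos ?_ fun v hv => ?_
  · ext i j
    simp [real_inner_comm]
  rw [star_trivial]
  have hterm_nonneg (n : ℕ) :
      0 ≤ (n ! : ℝ)⁻¹ * (v ⬝ᵥ (of fun i j => ⟪x i, x j⟫_ℝ ^ n) *ᵥ v) := by
    have := (posSemidef_inner_pow x n).dotProduct_mulVec_nonneg v
    rw [star_trivial] at this
    positivity
  have hsum := hasSum_dotProduct_exp_inner_mulVec x v
  refine (hsum.nonneg hterm_nonneg).lt_of_ne' fun hzero => hv ?_
  rw [hzero, hasSum_zero_iff_of_nonneg hterm_nonneg] at hsum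
  refine eq_zero_of_forall_sum_mul_inner_pow_eq_zero hx fun i n => ?_
  have hform : v ⬝ᵥ (of fun i j => ⟪x i, x j⟫_ℝ ^ n) *ᵥ v = 0 := by
    simpa [Nat.factorial_ne_zero] using congrFun hsum n
  have hAv := ((posSemidef_inner_pow x n).dotProduct_mulVec_zero_iff v).mp
    (by rwa [star_trivial])
  simpa [mulVec, dotProduct, mul_comm] using congrFun hAv i

theorem posDef_exp_neg_mul_norm_sub_sq {x : ι → E} (hx : Function.Injective x) {γ : ℝ}
    (hγ : 0 < γ) :
    (of fun i j => Real.exp (-γ * ‖x i - x j‖ ^ 2)).PosDef := by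
  classical
  set d : ι → ℝ := fun i => Real.exp (-γ * ‖x i‖ ^ 2)
  have hd : Function.Injective (diagonal d).mulVec :=
    mulVec_injective_of_isUnit <| isUnit_diagonal.mpr <|
      Pi.isUnit_iff.mpr fun _ => (Real.exp_pos _).ne'.isUnit
  have hy : Function.Injective fun i => √(2 * γ) • x i :=
    (smul_right_injective E (by positivity)).comp hx
  convert (posDef_exp_inner hy).conjTranspose_mul_mul_same hd using 1
  ext i j
  simp only [diagonal_conjTranspose, star_trivial, diagonal_mul, mul_diagonal, of_apply,
    real_inner_smul_left, real_inner_smul_right, d, ← Real.exp_add]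
  congr 1
  rw [norm_sub_sq_real, ← mul_assoc, Real.mul_self_sqrt (by positivity)]
  ring

end

/-- For distinct points `x_1, ..., x_m` in `ℝ^K` and the Gaussian RBF kernel
`k(x,y) = exp(-γ‖x-y‖²)` with `γ > 0`, the Gram matrix is strictly positive
definite; hence for any targets `y` there is a unique `θ` with `K_G θ = y`, and
the function `g(x) = Σ_i θ_i k(x_i, x)` interpolates: `g(x_j) = y_j` for all `j`. -/
theorem stmt_7 {m K : ℕ} (x : Fin m → EuclideanSpace ℝ (Fin K))
    (hx : Function.Injective x) (γ : ℝ) (hγ : 0 < γ) :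
    (Matrix.of fun i j => Real.exp (-γ * ‖x i - x j‖ ^ 2) :
        Matrix (Fin m) (Fin m) ℝ).PosDef ∧
    ∀ y : Fin m → ℝ, ∃! θ : Fin m → ℝ,
      (Matrix.of fun i j => Real.exp (-γ * ‖x i - x j‖ ^ 2) :
          Matrix (Fin m) (Fin m) ℝ).mulVec θ = y ∧
      ∀ j, (∑ i, θ i * Real.exp (-γ * ‖x i - x j‖ ^ 2)) = y j := by
  have hK := posDef_exp_neg_mul_norm_sub_sq hx hγ
  refine ⟨hK, fun y => ?_⟩
  obtain ⟨θ, hθ, huniq⟩ := hK.mulVec_bijective.existsUnique y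
  refine ⟨θ, ⟨hθ, fun j => ?_⟩, fun θ' h => huniq θ' h.1⟩
  exact congrFun (((isHermitian_iff_isSymm.mp hK.isHermitian).vecMul_eq_mulVec θ).trans hθ) j
end

section
/- Let F: R^K → R be the exact quadratic F(s) = F(s*) + g^T(s - s*) + (1/2)(s - s*)^T H (s - s*) with symmetric H, where s* = 1_K. If s has i.i.d. Bernoulli(p) coordinates, then the population OLS coefficient vector β* (minimizing E[(F(s) - α - β^T s)^2]) satisfies β* = g + (p - 1) H 1_K + ((1 - 2p)/2) diag(H), where diag(H) ∈ R^K is the vector of diagonal entries of H. -/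
open Finset

/-- Expectation of `f` under the law of a vector of `K` i.i.d. Bernoulli(p)
coordinates (each coordinate is `1` with probability `p`, `0` otherwise). -/
noncomputable def bexp (p : ℝ) (K : ℕ) (f : (Fin K → ℝ) → ℝ) : ℝ :=
  ∑ s : Fin K → Bool, (∏ i, if s i then p else 1 - p) *
    f (fun i => if s i then (1 : ℝ) else 0)

/-- Covariance under the i.i.d. Bernoulli(p) law. -/
noncomputable def bcov (p : ℝ) (K : ℕ) (f g : (Fin K → ℝ) → ℝ) : ℝ :=
  bexp p K (fun v => f v * g v) - bexp p K f * bexp p K g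



section
variable {K : ℕ} (p : ℝ)

lemma bexp_add (f g : (Fin K → ℝ) → ℝ) :
    bexp p K (fun v => f v + g v) = bexp p K f + bexp p K g := by
  simp [bexp, mul_add, Finset.sum_add_distrib]

lemma bexp_sub (f g : (Fin K → ℝ) → ℝ) :
    bexp p K (fun v => f v - g v) = bexp p K f - bexp p K g := by
  simp [bexp, mul_sub, Finset.sum_sub_distrib]

lemma bexp_const_mul (c : ℝ) (f : (Fin K → ℝ) → ℝ) :
    bexp p K (fun v => c * f v) = c * bexp p K f := by
  simp [bexp, Finset.mul_sum]; apply Finset.sum_congr rfl; intros; ring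

lemma bexp_sum {ι : Type*} (t : Finset ι) (f : ι → (Fin K → ℝ) → ℝ) :
    bexp p K (fun v => ∑ i ∈ t, f i v) = ∑ i ∈ t, bexp p K (f i) := by
  simp only [bexp, Finset.mul_sum]
  exact Finset.sum_comm

lemma bexp_congr (f g : (Fin K → ℝ) → ℝ)
    (h : ∀ s : Fin K → Bool, f (fun i => if s i then (1:ℝ) else 0)
        = g (fun i => if s i then (1:ℝ) else 0)) :
    bexp p K f = bexp p K g :=
  Finset.sum_congr rfl fun s _ => by rw [h s]

lemma bexp_monomial (S : Finset (Fin K)) :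
    bexp p K (fun v => ∏ i ∈ S, v i) = p ^ S.card := by
  have h1 : ∀ s : Fin K → Bool,
      (∏ i, if s i then p else 1 - p) * (∏ i ∈ S, (if s i then (1:ℝ) else 0))
      = ∏ i, ((if s i then p else 1 - p) *
          (if i ∈ S then (if s i then (1:ℝ) else 0) else 1)) := by
    intro s
    rw [Finset.prod_mul_distrib]
    congr 1
    rw [Finset.prod_ite_mem, Finset.univ_inter]
  unfold bexp
  simp only [h1]
  have h3 : (∑ s : Fin K → Bool, ∏ i, ((if s i then p else 1 - p) *
      (if i ∈ S then (if s i then (1:ℝ) else 0) else 1)))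
      = ∏ i, ∑ b : Bool, ((if b then p else 1 - p) *
          (if i ∈ S then (if b then (1:ℝ) else 0) else 1)) := by
    rw [Finset.prod_univ_sum]
    rw [show Fintype.piFinset (fun _ : Fin K => (Finset.univ : Finset Bool))
        = Finset.univ from Fintype.piFinset_univ]
  rw [h3]
  have h2 : ∀ i, (∑ b : Bool, ((if b then p else 1 - p) *
      (if i ∈ S then (if b then (1:ℝ) else 0) else 1))) = if i ∈ S then p else 1 := by
    intro i
    by_cases h : i ∈ S <;> simp [h, Fintype.sum_bool]
  simp only [h2]
  rw [Finset.prod_ite_mem, Finset.univ_inter, Finset.prod_const]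

lemma bexp_const (c : ℝ) : bexp p K (fun _ => c) = c := by
  have := bexp_monomial p (∅ : Finset (Fin K))
  simp at this
  calc bexp p K (fun _ => c) = bexp p K (fun v => c * ∏ i ∈ (∅ : Finset (Fin K)), v i) := by
        apply bexp_congr; intro s; simp
    _ = c := by rw [bexp_const_mul, bexp_monomial]; simp
end

section
variable {K : ℕ} (p : ℝ)

lemma bexp_X (k : Fin K) : bexp p K (fun v => v k) = p := by
  have := bexp_monomial p ({k} : Finset (Fin K))
  simpa using this

lemma bexp_pair (k i : Fin K) :
    bexp p K (fun v => v k * v i) = if k = i then p else p ^ 2 := by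
  by_cases h : k = i
  · subst h
    rw [if_pos rfl]
    have h2 : bexp p K (fun v => v k * v k) = bexp p K (fun v => v k) := by
      apply bexp_congr; intro s; by_cases hs : s k <;> simp [hs]
    rw [h2, bexp_X]
  · rw [if_neg h]
    have : bexp p K (fun v => v k * v i)
        = bexp p K (fun v => ∏ m ∈ ({k, i} : Finset (Fin K)), v m) := by
      apply bexp_congr; intro s; rw [Finset.prod_pair h]
    rw [this, bexp_monomial, Finset.card_pair h]

lemma prod_insert_idem (x : Fin K → ℝ) (hx : ∀ m, x m * x m = x m)
    (a : Fin K) (S : Finset (Fin K)) :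
    ∏ m ∈ insert a S, x m = x a * ∏ m ∈ S, x m := by
  by_cases h : a ∈ S
  · rw [Finset.insert_eq_self.2 h, ← Finset.mul_prod_erase S x h, ← mul_assoc, hx]
  · exact Finset.prod_insert h

lemma bexp_triple (k i j : Fin K) :
    bexp p K (fun v => v k * (v i * v j))
      = p ^ (({k, i, j} : Finset (Fin K)).card) := by
  have : bexp p K (fun v => v k * (v i * v j))
      = bexp p K (fun v => ∏ m ∈ ({k, i, j} : Finset (Fin K)), v m) := by
    apply bexp_congr
    intro s
    have hx : ∀ m, (if s m then (1:ℝ) else 0) * (if s m then (1:ℝ) else 0)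
        = (if s m then (1:ℝ) else 0) := by
      intro m; by_cases hs : s m <;> simp [hs]
    rw [prod_insert_idem _ hx, prod_insert_idem _ hx, Finset.prod_singleton]
  rw [this, bexp_monomial]
end


lemma hHkey_lemma {K : ℕ} (p : ℝ) (H : Matrix (Fin K) (Fin K) ℝ) (hH : H.IsSymm) (k : Fin K) :
    ∑ i, ∑ j, ((H i j * p ^ (({k, i, j} : Finset (Fin K)).card)
            - H i j * (if k = i then p else p ^ 2)
            - H i j * (if k = j then p else p ^ 2) + H i j * p))
      - p * ∑ i, ∑ j, (H i j * (if i = j then p else p ^ 2)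
            - H i j * p - H i j * p + H i j)
    = -(2 * (p * (1 - p) ^ 2)) * (∑ j, H k j)
      + (2 * (p * (1 - p) ^ 2) - p * (1 - p)) * H k k := by
  have hT : ∀ i j : Fin K,
      (H i j * p ^ (({k, i, j} : Finset (Fin K)).card)
        - H i j * (if k = i then p else p ^ 2)
        - H i j * (if k = j then p else p ^ 2) + H i j * p)
      - p * (H i j * (if i = j then p else p ^ 2) - H i j * p - H i j * p + H i j)
      = (if i = k then -(p * (1 - p) ^ 2) * H k j else 0)
        + (if j = k then -(p * (1 - p) ^ 2) * H i k else 0)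
        + (if i = k then (if j = k then (2 * (p * (1 - p) ^ 2) - p * (1 - p)) * H k k
            else 0) else 0) := by
    intro i j
    by_cases hik : i = k
    · subst hik
      by_cases hjk : j = i
      · subst hjk
        have hc : ({j, j, j} : Finset (Fin K)).card = 1 := by simp
        simp only [hc]
        simp
        ring
      · have hc : ({i, i, j} : Finset (Fin K)).card = 2 := by
          rw [Finset.insert_idem, Finset.card_pair (Ne.symm hjk)]
        simp only [hc]
        simp [hjk, Ne.symm hjk]
        ring
    · by_cases hjk : j = k
      · subst hjk
        have hc : ({j, i, j} : Finset (Fin K)).card = 2 := by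
          simp [Finset.insert_comm, Finset.card_insert_of_notMem, hik, Ne.symm hik]
        simp only [hc]
        simp [hik, Ne.symm hik]
        ring
      · by_cases hij : i = j
        · subst hij
          have hc : ({k, i, i} : Finset (Fin K)).card = 2 := by
            simp [Finset.card_insert_of_notMem, Ne.symm hik, hik]
          simp only [hc]
          simp [hik, Ne.symm hik]
          ring
        · have hc : ({k, i, j} : Finset (Fin K)).card = 3 := by
            rw [Finset.card_insert_of_notMem (by
                simp only [Finset.mem_insert, Finset.mem_singleton]
                push_neg
                exact ⟨Ne.symm hik, Ne.symm hjk⟩),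
              Finset.card_pair hij]
          simp only [hc]
          simp [hik, hjk, hij, Ne.symm hik, Ne.symm hjk]
          ring
  rw [Finset.mul_sum, ← Finset.sum_sub_distrib]
  rw [Finset.sum_congr rfl (fun i (_ : i ∈ Finset.univ) => by
    rw [Finset.mul_sum, ← Finset.sum_sub_distrib])]
  rw [Finset.sum_congr rfl (fun i (_ : i ∈ Finset.univ) =>
    Finset.sum_congr rfl fun j _ => hT i j)]
  simp only [Finset.sum_add_distrib]
  have e1 : ∑ i, ∑ j, (if i = k then -(p * (1 - p) ^ 2) * H k j else 0)
      = -(p * (1 - p) ^ 2) * ∑ j, H k j := by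
    rw [Finset.sum_congr rfl (fun i (_ : i ∈ univ) => show
        ∑ j, (if i = k then -(p * (1 - p) ^ 2) * H k j else 0)
        = if i = k then -(p * (1 - p) ^ 2) * ∑ j, H k j else 0 by
      split <;> simp [Finset.mul_sum])]
    simp
  have e2 : ∑ i, ∑ j, (if j = k then -(p * (1 - p) ^ 2) * H i k else 0)
      = -(p * (1 - p) ^ 2) * ∑ j, H k j := by
    have h' : ∀ i : Fin K, ∑ j, (if j = k then -(p * (1 - p) ^ 2) * H i k else 0)
        = -(p * (1 - p) ^ 2) * H i k := by intro i; simp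
    rw [Finset.sum_congr rfl (fun i _ => h' i), ← Finset.mul_sum]
    congr 1
    exact Finset.sum_congr rfl fun i _ => hH.apply k i
  have e3 : ∑ i, ∑ j, (if i = k then (if j = k then
        (2 * (p * (1 - p) ^ 2) - p * (1 - p)) * H k k else 0) else 0)
      = (2 * (p * (1 - p) ^ 2) - p * (1 - p)) * H k k := by
    simp
  rw [e1, e2, e3]
  ring


/-- For the exact quadratic `F(s) = F₀ + gᵀ(s - 1_K) + (1/2)(s - 1_K)ᵀ H (s - 1_K)`
with symmetric `H` and i.i.d. Bernoulli(p) coordinates, the population OLS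
coefficient `β*_k = Cov[s_k, F(s)] / Var[s_k]` equals
`g_k + (p - 1)(H 1_K)_k + ((1 - 2p)/2) H(k,k)`. -/
theorem stmt_12 {K : ℕ} (p : ℝ) (hp : p ∈ Set.Ioo (0 : ℝ) 1)
    (F0 : ℝ) (g : Fin K → ℝ) (H : Matrix (Fin K) (Fin K) ℝ) (hH : H.IsSymm)
    (k : Fin K) :
    bcov p K (fun v => v k)
        (fun v => F0 + (∑ i, g i * (v i - 1))
          + (1 : ℝ) / 2 * ∑ i, ∑ j, H i j * (v i - 1) * (v j - 1))
      / (p * (1 - p))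
    = g k + (p - 1) * (∑ j, H k j) + ((1 - 2 * p) / 2) * H k k := by
  have hB2 : bexp p K (fun v => F0 + (∑ i, g i * (v i - 1))
          + (1 : ℝ) / 2 * ∑ i, ∑ j, H i j * (v i - 1) * (v j - 1))
      = F0 + (∑ i, (g i * p - g i))
        + (1 : ℝ) / 2 * ∑ i, ∑ j, (H i j * (if i = j then p else p ^ 2)
            - H i j * p - H i j * p + H i j) := by
    have e : (fun v : Fin K → ℝ => F0 + (∑ i, g i * (v i - 1))
          + (1 : ℝ) / 2 * ∑ i, ∑ j, H i j * (v i - 1) * (v j - 1))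
        = fun v => F0 + (∑ i, (g i * v i - g i))
          + (1 : ℝ) / 2 * ∑ i, ∑ j, (H i j * (v i * v j)
              - H i j * v i - H i j * v j + H i j) := by
      funext v
      have h1 : ∑ i, g i * (v i - 1) = ∑ i, (g i * v i - g i) :=
        Finset.sum_congr rfl fun i _ => by ring
      have h2 : ∀ i : Fin K, ∑ j, H i j * (v i - 1) * (v j - 1)
          = ∑ j, (H i j * (v i * v j) - H i j * v i - H i j * v j + H i j) :=
        fun i => Finset.sum_congr rfl fun j _ => by ring
      rw [h1, Finset.sum_congr rfl (fun i _ => h2 i)]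
    rw [e]
    simp only [bexp_add, bexp_sub, bexp_sum, bexp_const_mul, bexp_const,
      bexp_X, bexp_pair, bexp_triple]
  have hB3 : bexp p K (fun v => v k * (F0 + (∑ i, g i * (v i - 1))
          + (1 : ℝ) / 2 * ∑ i, ∑ j, H i j * (v i - 1) * (v j - 1)))
      = F0 * p + (∑ i, (g i * (if k = i then p else p ^ 2) - g i * p))
        + (1 : ℝ) / 2 * ∑ i, ∑ j, (H i j * p ^ (({k, i, j} : Finset (Fin K)).card)
            - H i j * (if k = i then p else p ^ 2)
            - H i j * (if k = j then p else p ^ 2) + H i j * p) := by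
    have e : (fun v : Fin K → ℝ => v k * (F0 + (∑ i, g i * (v i - 1))
          + (1 : ℝ) / 2 * ∑ i, ∑ j, H i j * (v i - 1) * (v j - 1)))
        = fun v => F0 * v k + (∑ i, (g i * (v k * v i) - g i * v k))
          + (1 : ℝ) / 2 * ∑ i, ∑ j, (H i j * (v k * (v i * v j))
              - H i j * (v k * v i) - H i j * (v k * v j) + H i j * v k) := by
      funext v
      have h1 : ∑ i, (g i * (v k * v i) - g i * v k)
          = v k * ∑ i, g i * (v i - 1) := by
        rw [Finset.mul_sum]; exact Finset.sum_congr rfl fun i _ => by ring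
      have h2 : ∑ i, ∑ j, (H i j * (v k * (v i * v j))
              - H i j * (v k * v i) - H i j * (v k * v j) + H i j * v k)
          = v k * ∑ i, ∑ j, H i j * (v i - 1) * (v j - 1) := by
        rw [Finset.mul_sum]
        refine Finset.sum_congr rfl fun i _ => ?_
        rw [Finset.mul_sum]
        exact Finset.sum_congr rfl fun j _ => by ring
      rw [h1, h2]; ring
    rw [e]
    simp only [bexp_add, bexp_sub, bexp_sum, bexp_const_mul, bexp_const,
      bexp_X, bexp_pair, bexp_triple]
  have hp1 : p * (1 - p) ≠ 0 := ne_of_gt (mul_pos hp.1 (by linarith [hp.2]))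
  have hcov : bcov p K (fun v => v k)
        (fun v => F0 + (∑ i, g i * (v i - 1))
          + (1 : ℝ) / 2 * ∑ i, ∑ j, H i j * (v i - 1) * (v j - 1))
      = bexp p K (fun v => v k * (F0 + (∑ i, g i * (v i - 1))
          + (1 : ℝ) / 2 * ∑ i, ∑ j, H i j * (v i - 1) * (v j - 1)))
        - bexp p K (fun v => v k) * bexp p K (fun v => F0 + (∑ i, g i * (v i - 1))
          + (1 : ℝ) / 2 * ∑ i, ∑ j, H i j * (v i - 1) * (v j - 1)) := rfl
  rw [hcov, hB3, hB2, bexp_X]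
  rw [div_eq_iff hp1]
  have hg1 : ∑ i, (g i * (if k = i then p else p ^ 2) - g i * p)
      = p * (∑ i, (g i * p - g i)) - (g k * p ^ 2 - g k * p) := by
    have h' : ∀ i ∈ Finset.univ, g i * (if k = i then p else p ^ 2) - g i * p
        = (g i * p ^ 2 - g i * p) - (if k = i then g i * p ^ 2 - g i * p else 0) := by
      intro i _
      by_cases h : k = i
      · simp [h]
      · simp [h]
    rw [Finset.sum_congr rfl h', Finset.sum_sub_distrib, Finset.sum_ite_eq]
    simp only [Finset.mem_univ, if_pos, Finset.mul_sum]
    congr 1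
    exact Finset.sum_congr rfl fun i _ => by ring
  have hkey := hHkey_lemma p H hH k
  linear_combination hg1 + (1 / 2 : ℝ) * hkey
end
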